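/- Let F be a free group of rank at least 2 with basis ā, and let X be a finite set of variables. For any finite family of finite sets of equations Σ_{ij}(x̄,ā) = 1 (i ≤ m, j ≤ m_i), where each Σ_{ij} is a word in the variables X and in the basis elements ā, there exists a single word σ(x̄,ā) in the variables X and the basis elements ā such that for every assignment x̄ ↦ F: the disjunction over i of the conjunctions over j of the equations Σ_{ij}(x̄,ā) = 1 holds in F if and only if σ(x̄,ā) = 1 holds in F. -/

import Mathlib

/-!
Write `a`, `b` for two distinct basis elements. For `x`, `y` of exponent sum zero in `a`, the
conjunction `x = 1 ∧ y = 1` is the single equation `[x a x⁻¹ · y a y⁻¹, a²] = 1`: the product then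
commutes with `a²`, hence lies in `⟨a⟩`, and has exponent sum two, hence equals `a²`; a cancellation
argument on reduced words (Malcev) shows that `a²` is a product of two conjugates of `a` only
trivially. Since `u = 1` iff `[u, a] = [u, b] = 1`, and commutators have exponent sum zero, this
encodes arbitrary conjunctions. The disjunction `x = 1 ∨ y = 1` is `[x, y] = [x, a y a⁻¹] =
[x, b y b⁻¹] = 1`: by commutative transitivity a nontrivial `x` forces `y` to commute with
`a y a⁻¹` and `b y b⁻¹`, which in a free group forces `y` to commute with `a` and `b`, so `y = 1`.
-/

open scoped commutatorElement

namespace FreeGroup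

section ReducedWords

variable {α : Type*} [DecidableEq α]

theorem IsReduced.invRev {L : List (α × Bool)} (h : IsReduced L) : IsReduced (invRev L) := by
  rw [isReduced_iff_reduce_eq, reduce_invRev, h.reduce_eq]

theorem exists_eq_mul_zpow_getLast_ne (c : α) (p : FreeGroup α) :
    ∃ (p₀ : FreeGroup α) (k : ℤ), p = p₀ * of c ^ k ∧ ∀ z ∈ p₀.toWord.getLast?, z.1 ≠ c := by
  suffices h : ∀ L : List (α × Bool), ∃ (L₀ : List (α × Bool)) (k : ℤ),
      L₀ <+: L ∧ mk L = mk L₀ * of c ^ k ∧ ∀ z ∈ L₀.getLast?, z.1 ≠ c by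
    obtain ⟨L₀, k, hpre, hp, hlast⟩ := h p.toWord
    have hL₀ : (mk L₀).toWord = L₀ := by
      rw [toWord_mk, (isReduced_toWord.infix hpre.isInfix).reduce_eq]
    exact ⟨mk L₀, k, by rw [← hp, mk_toWord], by rwa [hL₀]⟩
  intro L
  induction L using List.reverseRecOn with
  | nil => exact ⟨[], 0, List.prefix_rfl, by simp, by simp⟩
  | append_singleton L x ih =>
    obtain ⟨L₀, k, hpre, hL, hlast⟩ := ih
    by_cases hx : x.1 = c
    · obtain ⟨x, e⟩ := x
      dsimp only at hx
      subst hx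
      refine ⟨L₀, k + if e then 1 else -1, hpre.trans (List.prefix_append _ _), ?_, hlast⟩
      rw [← mul_mk, hL, zpow_add, mul_assoc]
      cases e <;> simp [of, inv_mk, invRev]
    · exact ⟨L ++ [x], 0, List.prefix_rfl, by simp, by simpa using hx⟩

theorem toWord_conj_of {c : α} {p : FreeGroup α} (hp : ∀ z ∈ p.toWord.getLast?, z.1 ≠ c) :
    (p * of c * p⁻¹).toWord = p.toWord ++ (c, true) :: invRev p.toWord := by
  have hred : IsReduced (p.toWord ++ (c, true) :: invRev p.toWord) := by
    refine List.isChain_append.2 ⟨isReduced_toWord,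
      List.isChain_cons.2 ⟨fun y hy => ?_, isReduced_toWord.invRev⟩, fun z hz y hy => ?_⟩
    · simp only [invRev, List.head?_reverse, List.getLast?_map, Option.mem_def,
        Option.map_eq_some_iff] at hy
      obtain ⟨z, hz, rfl⟩ := hy
      exact fun h => absurd h.symm (hp z hz)
    · obtain rfl : y = (c, true) := Option.some_injective _ hy.symm
      exact fun h => absurd h (hp z hz)
  have hmk : p * of c * p⁻¹ = mk (p.toWord ++ (c, true) :: invRev p.toWord) := by
    conv_lhs => rw [← mk_toWord (x := p)]
    simp [of, inv_mk, mul_mk]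
  rw [hmk, toWord_mk, hred.reduce_eq]

theorem reduce_inv_sq_append_ne {c : α} {P Q : List (α × Bool)} (hP : P ≠ [])
    (hred : IsReduced (P ++ (c, true) :: invRev P))
    (hPc : ∀ z ∈ P.getLast?, z.1 ≠ c) (hQc : ∀ z ∈ Q.getLast?, z.1 ≠ c) :
    reduce ((c, false) :: (c, false) :: (P ++ (c, true) :: invRev P)) ≠
      Q ++ (c, false) :: invRev Q := by
  -- At most two letters cancel on the left. In each case comparing lengths and the letter in the
  -- middle position forces `P` or `Q` to end in a `c`-letter, or `c` to equal `c⁻¹`.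
  have hcancel (L : List (α × Bool)) : reduce ((c, false) :: (c, true) :: L) = reduce L :=
    reduce.Step.eq Red.Step.cons_not
  intro h
  obtain ⟨x, P, rfl⟩ := List.exists_cons_of_ne_nil hP
  by_cases hx : x = (c, true)
  · subst hx
    obtain ⟨y, P, rfl⟩ := List.exists_cons_of_ne_nil (l := P) (by rintro rfl; simp at hPc)
    simp only [List.cons_append] at h hred
    rw [← reduce_cons_reduce, hcancel] at h
    by_cases hy : y = (c, true)
    · subst hy
      rw [reduce_cons_reduce, hcancel,
        (hred.infix ⟨[(c, true), (c, true)], [], by simp⟩).reduce_eq] at h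
      have hlen := congrArg List.length h
      simp only [List.length_append, List.length_cons, invRev_length] at hlen
      have h' : (P ++ [(c, true)]) ++ invRev ((c, true) :: (c, true) :: P) =
          Q ++ (c, false) :: invRev Q := by simpa using h
      have := (List.append_inj h' (by simp; omega)).1
      simp [← this] at hQc
    · rw [reduce_cons_reduce, IsReduced.reduce_eq] at h
      · have hlen := congrArg List.length h
        simp only [List.length_append, List.length_cons, invRev_length] at hlen
        have h' : [(c, false), y] ++ P ++ (c, true) :: invRev ((c, true) :: y :: P) =
            Q ++ (c, false) :: invRev Q := by simpa using h
        simpa using (List.append_inj h' (by simp; omega)).2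
      · rw [isReduced_cons_cons] at hred ⊢
        exact ⟨fun h => by grind, hred.2⟩
  · have hred' :
        IsReduced ((c, false) :: (c, false) :: (x :: P ++ (c, true) :: invRev (x :: P))) := by
      simp only [isReduced_cons_cons, List.cons_append] at hred ⊢
      exact ⟨by simp, fun h => by grind, hred⟩
    rw [hred'.reduce_eq] at h
    have hlen := congrArg List.length h
    simp only [List.length_append, List.length_cons, invRev_length] at hlen
    have h' : [(c, false), (c, false), x] ++ P ++ (c, true) :: invRev (x :: P) =
        (Q ++ [(c, false)]) ++ invRev Q := by simpa using h
    have := congrArg List.getLast? (List.append_inj h'.symm (by simp; omega)).1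
    simp at this
    exact hPc _ this.symm rfl

theorem conj_of_mul_conj_of_ne_sq {c : α} {p q : FreeGroup α} (hp : p ≠ 1)
    (hpc : ∀ z ∈ p.toWord.getLast?, z.1 ≠ c) (hqc : ∀ z ∈ q.toWord.getLast?, z.1 ≠ c) :
    p * of c * p⁻¹ * (q * of c * q⁻¹) ≠ of c * of c := by
  intro h
  have hA := toWord_conj_of hpc
  refine reduce_inv_sq_append_ne (by simpa using hp) (hA ▸ isReduced_toWord) hpc hqc ?_
  have heq : (q * of c * q⁻¹)⁻¹ = mk [(c, false), (c, false)] * (p * of c * p⁻¹) := by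
    have : mk [(c, false), (c, false)] = (of c * of c)⁻¹ := by simp [of, inv_mk, mul_mk, invRev]
    rw [this, ← h]
    group
  calc reduce ((c, false) :: (c, false) :: (p.toWord ++ (c, true) :: invRev p.toWord))
      = ((q * of c * q⁻¹)⁻¹).toWord := by
        rw [heq, ← mk_toWord (x := p * of c * p⁻¹), hA, mul_mk, toWord_mk]
        rfl
    _ = q.toWord ++ (c, false) :: invRev q.toWord := by
        rw [toWord_inv, toWord_conj_of hqc]
        simp [invRev, Function.comp_def]

theorem conj_of_eq_of_of_mul_conj_eq_sq {c : α} {p q : FreeGroup α}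
    (h : p * of c * p⁻¹ * (q * of c * q⁻¹) = of c * of c) : p * of c * p⁻¹ = of c := by
  obtain ⟨p, k, rfl, hpc⟩ := exists_eq_mul_zpow_getLast_ne c p
  obtain ⟨q, l, rfl, hqc⟩ := exists_eq_mul_zpow_getLast_ne c q
  have hconj (r : FreeGroup α) (n : ℤ) :
      r * of c ^ n * of c * (r * of c ^ n)⁻¹ = r * of c * r⁻¹ := by
    group
  rw [hconj, hconj] at h
  rw [hconj]
  by_contra hne
  exact conj_of_mul_conj_of_ne_sq (by rintro rfl; simp at hne) hpc hqc h

end ReducedWords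

variable {α : Type*}

theorem not_commute_of_of {s t : α} (h : s ≠ t) : ¬Commute (of s : FreeGroup α) (of t) := by
  classical
  intro hc
  have := congrArg toWord hc.eq
  simp [toWord_mul, reduce.cons, h] at this

instance [Subsingleton α] : IsCyclic (FreeGroup α) := by
  cases isEmpty_or_nonempty α
  · infer_instance
  · have : Unique α := uniqueOfSubsingleton (Classical.arbitrary α)
    exact mulEquivIntOfUnique.isCyclic.2 inferInstance

section ExpSum

variable [DecidableEq α] (c : α)

def expSum : FreeGroup α →* Multiplicative ℤ :=
  lift (Pi.mulSingle c (Multiplicative.ofAdd 1))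

@[simp]
theorem expSum_of_self : expSum c (of c) = Multiplicative.ofAdd 1 := by
  simp [expSum]

theorem expSum_of_of_ne {t : α} (h : t ≠ c) : expSum c (of t) = 1 := by
  simp [expSum, h]

@[simp]
theorem expSum_commutatorElement (x y : FreeGroup α) : expSum c ⁅x, y⁆ = 1 := by
  simp [commutatorElement_eq_one_iff_mul_comm, mul_comm]

end ExpSum

end FreeGroup

namespace IsFreeGroup

variable {G : Type*} [Group G] [IsFreeGroup G]

theorem isCyclic_of_subsingleton_generators [Subsingleton (Generators G)] : IsCyclic G :=
  (toFreeGroup G).isCyclic.2 inferInstance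

theorem isCyclic_of_isMulCommutative [IsMulCommutative G] : IsCyclic G := by
  by_cases h : Subsingleton (Generators G)
  · exact isCyclic_of_subsingleton_generators
  obtain ⟨s, t, hst⟩ := not_subsingleton_iff_nontrivial.1 h |>.exists_pair_ne
  refine absurd ?_ (FreeGroup.not_commute_of_of hst)
  simpa [Commute, SemiconjBy] using congrArg (toFreeGroup G) (isMulCommutative_iff.1 ‹_›
    ((toFreeGroup G).symm (FreeGroup.of s)) ((toFreeGroup G).symm (FreeGroup.of t)))

theorem exists_zpow_eq_of_commute {x y : G} (h : Commute x y) :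
    ∃ (z : G) (i j : ℤ), z ^ i = x ∧ z ^ j = y := by
  let H := Subgroup.closure {x, y}
  have : IsMulCommutative H := Subgroup.isMulCommutative_closure (by
    simp only [Set.mem_insert_iff, Set.mem_singleton_iff]
    rintro _ (rfl | rfl) _ (rfl | rfl) <;> first | rfl | exact h.eq | exact h.eq.symm)
  obtain ⟨z, hz⟩ := (isCyclic_of_isMulCommutative (G := H)).exists_generator
  obtain ⟨i, hi⟩ := Subgroup.mem_zpowers_iff.1 (hz ⟨x, Subgroup.subset_closure (by simp)⟩)
  obtain ⟨j, hj⟩ := Subgroup.mem_zpowers_iff.1 (hz ⟨y, Subgroup.subset_closure (by simp)⟩)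
  exact ⟨z, i, j, congrArg Subtype.val hi, congrArg Subtype.val hj⟩

end IsFreeGroup

namespace FreeGroup

variable {α : Type*} [DecidableEq α]

theorem eq_zpow_expSum_of_commute {c : α} {z : FreeGroup α} (h : Commute z (of c)) :
    z = of c ^ Multiplicative.toAdd (expSum c z) := by
  obtain ⟨w, i, j, rfl, hj⟩ := IsFreeGroup.exists_zpow_eq_of_commute h
  have hj1 : j * Multiplicative.toAdd (expSum c w) = 1 := by
    simpa using congrArg (Multiplicative.toAdd ∘ expSum c) hj
  rcases Int.eq_one_or_neg_one_of_mul_eq_one hj1 with rfl | rfl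
  · rw [zpow_one] at hj
    simp [hj]
  · rw [zpow_neg_one, inv_eq_iff_eq_inv] at hj
    simp [hj]

theorem eq_one_of_commute_of_of {s t : α} (hst : s ≠ t) {z : FreeGroup α}
    (hs : Commute z (of s)) (ht : Commute z (of t)) : z = 1 := by
  have h1 : expSum t z = 1 := by
    rw [eq_zpow_expSum_of_commute hs, map_zpow, expSum_of_of_ne t hst, one_zpow]
  rw [eq_zpow_expSum_of_commute ht, h1]
  simp

end FreeGroup

namespace IsFreeGroup

variable {G : Type*} [Group G] [IsFreeGroup G]

theorem isCyclic_of_commute_of_ne_one {g : G} (hg : g ≠ 1) (h : ∀ x, Commute x g) :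
    IsCyclic G := by
  classical
  by_cases hsub : Subsingleton (Generators G)
  · exact isCyclic_of_subsingleton_generators
  obtain ⟨s, t, hst⟩ := not_subsingleton_iff_nontrivial.1 hsub |>.exists_pair_ne
  have hcomm (x) : Commute (FreeGroup.of x) (toFreeGroup G g) := by
    simpa using (h ((toFreeGroup G).symm (FreeGroup.of x))).map (toFreeGroup G)
  exact absurd ((toFreeGroup G).map_eq_one_iff.1
    (FreeGroup.eq_one_of_commute_of_of hst (hcomm s).symm (hcomm t).symm)) hg

theorem isCyclic_centralizer {g : G} (hg : g ≠ 1) : IsCyclic (Subgroup.centralizer {g}) :=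
  isCyclic_of_commute_of_ne_one (g := ⟨g, Subgroup.mem_centralizer_singleton_iff.2 rfl⟩)
    (by simpa using hg) fun x => Subtype.ext (Subgroup.mem_centralizer_singleton_iff.1 x.2)

theorem commute_trans {g u v : G} (hg : g ≠ 1) (hu : Commute u g) (hv : Commute g v) :
    Commute u v := by
  have := isCyclic_centralizer hg
  exact congrArg Subtype.val <| isMulCommutative_iff.1 inferInstance
    (⟨u, Subgroup.mem_centralizer_singleton_iff.2 hu.eq⟩ : Subgroup.centralizer {g})
    ⟨v, Subgroup.mem_centralizer_singleton_iff.2 hv.eq.symm⟩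

end IsFreeGroup

namespace FreeGroup

variable {α : Type*}

theorem eq_one_of_conj_eq_inv {c w : FreeGroup α} (h : c * w * c⁻¹ = w⁻¹) : w = 1 := by
  by_cases hc : c = 1
  · exact self_eq_inv.1 (by simpa [hc] using h)
  have hc2 : c ^ 2 * w * (c ^ 2)⁻¹ = w :=
    calc c ^ 2 * w * (c ^ 2)⁻¹ = c * (c * w * c⁻¹) * c⁻¹ := by rw [pow_two]; group
      _ = (c * w * c⁻¹)⁻¹ := by nth_rewrite 1 [h]; group
      _ = w := by rw [h, inv_inv]
  have hcw : Commute c w := IsFreeGroup.commute_trans ((pow_eq_one_iff_left two_ne_zero).not.2 hc)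
    (Commute.self_pow c 2) (mul_inv_eq_iff_eq_mul.1 hc2)
  rw [hcw.eq, mul_inv_cancel_right] at h
  exact self_eq_inv.1 h

theorem commute_of_commute_conj {c g : FreeGroup α} (hg : g ≠ 1) (h : Commute g (c * g * c⁻¹)) :
    Commute c g := by
  obtain ⟨⟨w, hw⟩, hgen⟩ := (IsFreeGroup.isCyclic_centralizer hg).exists_generator
  have hpow (u) (hu : Commute u g) : ∃ k : ℤ, w ^ k = u := by
    obtain ⟨k, hk⟩ := Subgroup.mem_zpowers_iff.1
      (hgen ⟨u, Subgroup.mem_centralizer_singleton_iff.2 hu.eq⟩)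
    exact ⟨k, congrArg Subtype.val hk⟩
  have hwg : Commute w g := Subgroup.mem_centralizer_singleton_iff.1 hw
  obtain ⟨m, rfl⟩ := hpow g (Commute.refl g)
  have hw1 : w ≠ 1 := by rintro rfl; simp at hg
  -- Conjugation by `c` preserves the cyclic centralizer of `g`, so `c w c⁻¹ = w ^ (±1)`.
  obtain ⟨k, hk⟩ := hpow (MulAut.conj c w) (IsFreeGroup.commute_trans
    ((MulAut.conj c).map_ne_one_iff.2 hg) (hwg.map (MulAut.conj c)) h.symm)
  obtain ⟨l, hl⟩ := hpow (MulAut.conj c⁻¹ w) (IsFreeGroup.commute_trans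
    ((MulAut.conj c⁻¹).map_ne_one_iff.2 hg) (hwg.map (MulAut.conj c⁻¹))
    (by convert h.map (MulAut.conj c⁻¹) using 1; simp [mul_assoc]))
  simp only [MulAut.conj_apply, inv_inv] at hk hl
  have hkl : k * l = 1 := by
    have : w ^ (k * l) = w := by
      rw [zpow_mul, hk, conj_zpow, hl]
      group
    rwa [← sub_eq_zero, ← IsMulTorsionFree.zpow_eq_one_iff_right hw1, zpow_sub, zpow_one,
      mul_inv_eq_one]
  rcases Int.eq_one_or_neg_one_of_mul_eq_one hkl with rfl | rfl
  · rw [zpow_one, eq_mul_inv_iff_mul_eq] at hk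
    exact Commute.zpow_right hk.symm m
  · rw [zpow_neg_one] at hk
    exact absurd (eq_one_of_conj_eq_inv hk.symm) hw1

section Words

variable {G : Type*} [Group G]

def malcevWord (a x y : G) : G := ⁅x * a * x⁻¹ * (y * a * y⁻¹), a * a⁆

def eqOneWord (a b u : G) : G := malcevWord a ⁅u, a⁆ ⁅u, b⁆

def andWord (a b x y : G) : G := malcevWord a (eqOneWord a b x) (eqOneWord a b y)

def orWord (a b x y : G) : G := andWord a b (andWord a b ⁅x, y⁆ ⁅x, a * y * a⁻¹⁆) ⁅x, b * y * b⁻¹⁆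

variable {H : Type*} [Group H] (f : G →* H) (a b : G)

theorem map_andWord (x y : G) : f (andWord a b x y) = andWord (f a) (f b) (f x) (f y) := by
  simp [andWord, eqOneWord, malcevWord]

theorem map_orWord (x y : G) : f (orWord a b x y) = orWord (f a) (f b) (f x) (f y) := by
  simp [orWord, map_andWord]

theorem map_foldr_andWord (l : List G) :
    f (l.foldr (andWord a b) 1) = (l.map f).foldr (andWord (f a) (f b)) 1 := by
  induction l <;> simp [map_andWord, *]

theorem map_foldr_orWord (l : List G) :
    f (l.foldr (orWord a b) a) = (l.map f).foldr (orWord (f a) (f b)) (f a) := by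
  induction l <;> simp [map_orWord, *]

end Words

variable [DecidableEq α] {s t : α}

theorem eq_one_of_conj_of_eq_of_expSum {p : FreeGroup α} (h : p * of s * p⁻¹ = of s)
    (hp : expSum s p = 1) : p = 1 := by
  rw [eq_zpow_expSum_of_commute (mul_inv_eq_iff_eq_mul.1 h), hp]
  simp

theorem malcevWord_eq_one_iff {p q : FreeGroup α} (hp : expSum s p = 1) (hq : expSum s q = 1) :
    malcevWord (of s) p q = 1 ↔ p = 1 ∧ q = 1 := by
  refine ⟨fun h => ?_, by rintro ⟨rfl, rfl⟩; simp [malcevWord]⟩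
  have hss : Commute (of s * of s) (of s) := (Commute.refl _).mul_left (Commute.refl _)
  have hA : Commute (p * of s * p⁻¹ * (q * of s * q⁻¹)) (of s) :=
    IsFreeGroup.commute_trans (by simp [← sq])
      (commutatorElement_eq_one_iff_commute.1 h) hss
  have hsq : p * of s * p⁻¹ * (q * of s * q⁻¹) = of s * of s := by
    rw [eq_zpow_expSum_of_commute hA, eq_zpow_expSum_of_commute hss]
    simp
  have hp' := conj_of_eq_of_of_mul_conj_eq_sq hsq
  rw [hp', mul_right_inj] at hsq
  exact ⟨eq_one_of_conj_of_eq_of_expSum hp' hp, eq_one_of_conj_of_eq_of_expSum hsq hq⟩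

theorem eqOneWord_eq_one_iff (hst : s ≠ t) (u : FreeGroup α) :
    eqOneWord (of s) (of t) u = 1 ↔ u = 1 := by
  rw [eqOneWord, malcevWord_eq_one_iff (expSum_commutatorElement ..) (expSum_commutatorElement ..),
    commutatorElement_eq_one_iff_commute, commutatorElement_eq_one_iff_commute]
  exact ⟨fun h => eq_one_of_commute_of_of hst h.1 h.2, by rintro rfl; simp⟩

theorem andWord_eq_one_iff (hst : s ≠ t) (x y : FreeGroup α) :
    andWord (of s) (of t) x y = 1 ↔ x = 1 ∧ y = 1 := by
  rw [andWord, malcevWord_eq_one_iff (p := eqOneWord (of s) (of t) x)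
    (q := eqOneWord (of s) (of t) y) (expSum_commutatorElement ..) (expSum_commutatorElement ..),
    eqOneWord_eq_one_iff hst, eqOneWord_eq_one_iff hst]

theorem orWord_eq_one_iff (hst : s ≠ t) (x y : FreeGroup α) :
    orWord (of s) (of t) x y = 1 ↔ x = 1 ∨ y = 1 := by
  simp only [orWord, andWord_eq_one_iff hst, commutatorElement_eq_one_iff_commute]
  refine ⟨fun ⟨⟨hxy, hs⟩, ht⟩ => ?_, by rintro (rfl | rfl) <;> simp⟩
  by_contra! ⟨hx, hy⟩
  have hcomm (c) (hc : Commute x (of c * y * (of c)⁻¹)) : Commute y (of c) :=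
    (commute_of_commute_conj hy (IsFreeGroup.commute_trans hx hxy.symm hc)).symm
  exact hy (eq_one_of_commute_of_of hst (hcomm s hs) (hcomm t ht))

theorem foldr_andWord_eq_one_iff (hst : s ≠ t) (l : List (FreeGroup α)) :
    l.foldr (andWord (of s) (of t)) 1 = 1 ↔ ∀ x ∈ l, x = 1 := by
  induction l <;> simp [andWord_eq_one_iff hst, *]

theorem foldr_orWord_eq_one_iff (hst : s ≠ t) (l : List (FreeGroup α)) :
    l.foldr (orWord (of s) (of t)) (of s) = 1 ↔ 1 ∈ l := by
  induction l with
  | nil => simp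
  | cons x l ih => rw [List.foldr_cons, orWord_eq_one_iff hst, ih, List.mem_cons, eq_comm]

end FreeGroup

theorem disjunction_of_conjunctions_eq_one_equation_general
    {β X : Type*} (b₁ b₂ : β) (hb : b₁ ≠ b₂)
    (m : ℕ) (mi : Fin m → ℕ) (W : ∀ i : Fin m, Fin (mi i) → FreeGroup (X ⊕ β)) :
    ∃ σ : FreeGroup (X ⊕ β),
      ∀ x : X → FreeGroup β,
        (∃ i, ∀ j, FreeGroup.lift (Sum.elim x FreeGroup.of) (W i j) = 1) ↔
          FreeGroup.lift (Sum.elim x FreeGroup.of) σ = 1 := by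
  classical
  let a : FreeGroup (X ⊕ β) := .of (.inr b₁)
  let b : FreeGroup (X ⊕ β) := .of (.inr b₂)
  refine ⟨(List.ofFn fun i => (List.ofFn (W i)).foldr (FreeGroup.andWord a b) 1).foldr
    (FreeGroup.orWord a b) a, fun x => ?_⟩
  simp [FreeGroup.map_foldr_orWord, FreeGroup.map_foldr_andWord, a, b, List.map_ofFn,
    FreeGroup.foldr_orWord_eq_one_iff hb, FreeGroup.foldr_andWord_eq_one_iff hb]

/-- In a free group `F = FreeGroup β` of rank at least two (witnessed by two distinct
basis elements `b₁ ≠ b₂`), any finite disjunction of finite conjunctions of equations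
`Σᵢⱼ(x̄,ā) = 1` — where each `Σᵢⱼ` is a word in a finite set `X` of variables and in the
basis elements `ā` (i.e. an element of the free group on `X ⊕ β`), evaluated in `F` by
assigning the variables and sending each constant to the corresponding basis element —
is equivalent, in `F`, to a single equation `σ(x̄,ā) = 1`. -/
theorem disjunction_of_conjunctions_eq_one_equation
    {β X : Type*} [Finite X] (b₁ b₂ : β) (hb : b₁ ≠ b₂)
    (m : ℕ) (mi : Fin m → ℕ) (W : ∀ i : Fin m, Fin (mi i) → FreeGroup (X ⊕ β)) :
    ∃ σ : FreeGroup (X ⊕ β),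
      ∀ x : X → FreeGroup β,
        (∃ i, ∀ j, FreeGroup.lift (Sum.elim x FreeGroup.of) (W i j) = 1) ↔
          FreeGroup.lift (Sum.elim x FreeGroup.of) σ = 1 :=
  disjunction_of_conjunctions_eq_one_equation_general b₁ b₂ hb m mi W
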